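/- Let k be a field of characteristic zero, B a unital associative k-algebra, and f ∈ B a unit such that ad(f) is locally nilpotent on B. For x ∈ k let Θ^x : B → B be given by Θ^x(u) = Σ_{i≥0} C(x,i)·(ad f)^i(u)·f^{−i} (a finite sum for each u). Then Θ^0 is the identity of B and Θ^x ∘ Θ^y = Θ^{x+y} for all x, y ∈ k; in particular each Θ^x is a k-algebra automorphism of B with inverse Θ^{−x}. -/

import Mathlib

/-!
With `L u = (f u - u f) f⁻¹`, the fact that `f⁻¹` commutes with `f` gives
`L^i u = (ad f)^i(u) f^{-i}`, so `Θ^x` is the binomial series `(1 + L)^x` of the locally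
nilpotent operator `L`. For such series the composition law is the Chu–Vandermonde identity
`C(x + y, n) = Σ_{i+j=n} C(x, i) C(y, j)`, applied after collecting the double sum
`Θ^x (Θ^y u)` by total degree.
-/

noncomputable def genBinom (k : Type*) [Field k] (x : k) (i : ℕ) : k :=
  (∏ j ∈ Finset.range i, (x - (j : k))) / (Nat.factorial i : k)

open Finset LinearMap

section GenBinom

variable {k : Type*} [Field k] [CharZero k]

theorem genBinom_eq_choose (x : k) (i : ℕ) : genBinom k x i = Ring.choose x i := by
  rw [Ring.choose_eq_smul, genBinom, ← Polynomial.aeval_eq_smeval, Polynomial.aeval_def,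
    ← Polynomial.eval_map, descPochhammer_map, descPochhammer_eval_eq_prod_range, smul_eq_mul,
    div_eq_inv_mul]

theorem genBinom_zero_succ (i : ℕ) : genBinom k 0 (i + 1) = 0 := by
  rw [genBinom_eq_choose, Ring.choose_zero_succ]

theorem genBinom_add (x y : k) (n : ℕ) :
    genBinom k (x + y) n = ∑ ij ∈ antidiagonal n, genBinom k x ij.1 * genBinom k y ij.2 := by
  simp only [genBinom_eq_choose]
  exact Ring.add_choose_eq n (Commute.all x y)

end GenBinom

theorem sum_range_smul_sum_range_smul_eq_sum_antidiagonal {R M : Type*} [CommSemiring R]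
    [AddCommMonoid M] [Module R M] {N : ℕ} (a b : ℕ → R) (T : ℕ → M)
    (hT : ∀ n, N ≤ n → T n = 0) :
    ∑ j ∈ range N, b j • ∑ i ∈ range N, a i • T (i + j) =
      ∑ n ∈ range N, (∑ ij ∈ antidiagonal n, a ij.1 * b ij.2) • T n := by
  simp_rw [smul_sum, sum_smul, smul_smul]
  rw [sum_sigma', sum_sigma']
  refine sum_bij_ne_zero (fun p _ _ => ⟨p.2 + p.1, (p.2, p.1)⟩) ?_ ?_ ?_ ?_
  · rintro ⟨j, i⟩ - hne
    have := not_le.mp (mt (hT _) (right_ne_zero_of_smul hne))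
    simpa only [mem_sigma, mem_range, HasAntidiagonal.mem_antidiagonal, and_true] using this
  · rintro ⟨j, i⟩ - - ⟨j', i'⟩ - - h
    simp_all
  · rintro ⟨n, i, j⟩ hp hne
    simp only [mem_sigma, mem_range, HasAntidiagonal.mem_antidiagonal] at hp
    obtain ⟨hn, rfl⟩ := hp
    exact ⟨⟨j, i⟩, by simp only [mem_sigma, mem_range]; omega,
      by simpa [mul_comm] using hne, rfl⟩
  · rintro ⟨j, i⟩ - -
    simp only [mul_comm]

section BinomialPowers

variable {k M : Type*} [Field k] [CharZero k] [AddCommMonoid M] [Module k M]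

/-- `Φ x` is `(1 + L) ^ x`, expanded as the binomial series `∑ C(x, i) • L ^ i`. -/
def IsBinomialPowers (L : Module.End k M) (Φ : k → Module.End k M) : Prop :=
  ∀ x u N, (L ^ N) u = 0 → Φ x u = ∑ i ∈ range N, genBinom k x i • (L ^ i) u

variable {L : Module.End k M} {Φ : k → Module.End k M}

theorem IsBinomialPowers.zero_apply (hΦ : IsBinomialPowers L Φ) (hL : ∀ u, ∃ N, (L ^ N) u = 0)
    (u : M) : Φ 0 u = u := by
  obtain ⟨N, hN⟩ := hL u
  rw [hΦ 0 u (N + 1) (Module.End.pow_map_zero_of_le N.le_succ hN), sum_range_succ']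
  simp only [genBinom_zero_succ, zero_smul, sum_const_zero, zero_add]
  simp [genBinom]

theorem IsBinomialPowers.apply_apply (hΦ : IsBinomialPowers L Φ) (hL : ∀ u, ∃ N, (L ^ N) u = 0)
    (x y : k) (u : M) : Φ x (Φ y u) = Φ (x + y) u := by
  obtain ⟨N, hN⟩ := hL u
  have hN' (j : ℕ) : (L ^ N) ((L ^ j) u) = 0 := by
    rw [← Module.End.mul_apply, (Commute.pow_pow_self L N j).eq, Module.End.mul_apply, hN,
      map_zero]
  calc Φ x (Φ y u)
      = ∑ j ∈ range N, genBinom k y j • ∑ i ∈ range N, genBinom k x i • (L ^ (i + j)) u := by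
        simp_rw [hΦ y u N hN, map_sum, map_smul, hΦ x _ N (hN' _), pow_add, Module.End.mul_apply]
    _ = ∑ n ∈ range N, genBinom k (x + y) n • (L ^ n) u := by
        simp_rw [sum_range_smul_sum_range_smul_eq_sum_antidiagonal _ _ _
          (fun n hn => Module.End.pow_map_zero_of_le hn hN), genBinom_add]
    _ = Φ (x + y) u := (hΦ _ u N hN).symm

end BinomialPowers

theorem pow_mulRight_mul_ad_apply (k : Type*) {B : Type*} [Field k] [Ring B] [Algebra k B]
    {f g : B} (hfg : Commute f g) (n : ℕ) (u : B) :
    ((mulRight k g * (mulLeft k f - mulRight k f)) ^ n) u =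
      (fun a => f * a - a * f)^[n] u * g ^ n := by
  have hcomm : Commute (mulRight k g) (mulLeft k f - mulRight k f) :=
    (commute_mulLeft_right f g).symm.sub_right (by ext; simp [mul_assoc, hfg.eq])
  rw [hcomm.mul_pow, pow_mulRight, Module.End.mul_apply, Module.End.pow_apply]
  rfl

theorem stmt_9 (k : Type*) [Field k] [CharZero k] (B : Type*) [Ring B] [Algebra k B]
    (f : Bˣ)
    (hnil : ∀ u : B, ∃ N : ℕ, (fun a => (f : B) * a - a * (f : B))^[N] u = 0)
    (Θ : k → (B →ₐ[k] B))
    (hΘ : ∀ (x : k) (u : B) (N : ℕ),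
      (fun a => (f : B) * a - a * (f : B))^[N] u = 0 →
      Θ x u = ∑ i ∈ Finset.range N,
        genBinom k x i •
          ((fun a => (f : B) * a - a * (f : B))^[i] u * ((f⁻¹ : Bˣ) : B) ^ i)) :
    Θ 0 = AlgHom.id k B ∧
    (∀ x y : k, (Θ x).comp (Θ y) = Θ (x + y)) ∧
    (∀ x : k, Function.Bijective (Θ x) ∧
      Function.LeftInverse (Θ (-x)) (Θ x) ∧ Function.RightInverse (Θ (-x)) (Θ x)) := by
  set L := mulRight k ((f⁻¹ : Bˣ) : B) * (mulLeft k (f : B) - mulRight k (f : B))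
  have hL (n : ℕ) (u : B) :
      (L ^ n) u = (fun a => (f : B) * a - a * (f : B))^[n] u * ((f⁻¹ : Bˣ) : B) ^ n :=
    pow_mulRight_mul_ad_apply k (Commute.refl (f : B)).units_inv_right n u
  have hL_eq_zero {n : ℕ} {u : B} :
      (L ^ n) u = 0 ↔ (fun a => (f : B) * a - a * (f : B))^[n] u = 0 := by
    rw [hL, ← Units.val_pow_eq_pow_val, Units.mul_left_eq_zero]
  have hΦ : IsBinomialPowers L fun x => (Θ x).toLinearMap := fun x u N hN => by
    simp only [AlgHom.toLinearMap_apply, hΘ x u N (hL_eq_zero.mp hN), hL]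
  have hLnil (u : B) : ∃ N, (L ^ N) u = 0 := (hnil u).imp fun _ => hL_eq_zero.mpr
  have hzero : Θ 0 = AlgHom.id k B := AlgHom.ext (hΦ.zero_apply hLnil)
  have hadd (x y : k) : (Θ x).comp (Θ y) = Θ (x + y) := AlgHom.ext (hΦ.apply_apply hLnil x y)
  refine ⟨hzero, hadd, fun x => ?_⟩
  have hleft : Function.LeftInverse (Θ (-x)) (Θ x) := fun u => by
    rw [← AlgHom.comp_apply, hadd, neg_add_cancel, hzero, AlgHom.id_apply]
  have hright : Function.RightInverse (Θ (-x)) (Θ x) := fun u => by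
    rw [← AlgHom.comp_apply, hadd, add_neg_cancel, hzero, AlgHom.id_apply]
  exact ⟨⟨hleft.injective, hright.surjective⟩, hleft, hright⟩
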